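/- arXiv:0910.1493 — 8 statements merged into one kernel-verified Lean document; each statement's English description precedes it below -/
import Mathlib

section
/- For every integer k ≥ 1 and every integer t, the value Q_{6k−1}(t) is divisible by 6. -/
/-!
Write `E n` for `dickson 2 a n`. The addition formula
`E (m + n + 2) = E (m + 1) * E (n + 1) - a * E m * E n` shows, as for the Fibonacci numbers, that
`E d ∣ E ((d + 1) * k + d)`. For `a = 1` and `d = 5` this gives `Q₅ = X (X² - 1) (X² - 3) ∣ Q_{6k-1}`,
and `6` divides `t (t² - 1) = (t - 1) t (t + 1)`.
-/

open Polynomial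

section Dickson

variable {R : Type*} [CommRing R]

theorem dickson_two_add_add_two (a : R) :
    ∀ m n : ℕ, dickson 2 a (m + n + 2) =
      dickson 2 a (m + 1) * dickson 2 a (n + 1) - C a * dickson 2 a m * dickson 2 a n
  | 0, n => by rw [zero_add, zero_add, dickson_add_two, dickson_one, dickson_zero]; norm_num
  | 1, n => by
    rw [show 1 + n + 2 = n + 1 + 2 by omega, dickson_add_two, dickson_add_two, dickson_two]
    norm_num
    ring
  | m + 2, n => by
    have h1 := dickson_add_two 2 a (m + n + 2)
    have h2 := dickson_two_add_add_two a (m + 1) n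
    have h3 := dickson_two_add_add_two a m n
    have h4 := dickson_add_two 2 a (m + 1)
    have h5 := dickson_add_two 2 a m
    ring_nf at h1 h2 h3 h4 h5 ⊢
    linear_combination h1 + X * h2 - C a * h3 - dickson 2 a (1 + n) * h4 + C a * dickson 2 a n * h5

theorem dickson_two_dvd_dickson_two (a : R) (d : ℕ) :
    ∀ k : ℕ, dickson 2 a d ∣ dickson 2 a ((d + 1) * k + d)
  | 0 => by simp
  | k + 1 => by
    cases d with
    | zero => rw [dickson_zero]; norm_num
    | succ e =>
      rw [show (e + 1 + 1) * (k + 1) + (e + 1) = ((e + 1 + 1) * k + (e + 1)) + e + 2 by ring,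
        dickson_two_add_add_two]
      exact dvd_sub (dvd_mul_left _ _)
        ((dvd_mul_of_dvd_right (dickson_two_dvd_dickson_two a (e + 1) k) _).mul_right _)

theorem dickson_two_one_five : dickson 2 (1 : R) 5 = X * (X ^ 2 - 1) * (X ^ 2 - 3) := by
  rw [dickson_add_two _ _ 3, dickson_add_two _ _ 2, dickson_add_two _ _ 1, dickson_two]
  norm_num
  ring

end Dickson

theorem Int.six_dvd_mul_sq_sub_one (t : ℤ) : 6 ∣ t * (t ^ 2 - 1) := by
  have h : ∀ s : ZMod 6, s * (s ^ 2 - 1) = 0 := by decide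
  exact_mod_cast (ZMod.intCast_zmod_eq_zero_iff_dvd _ 6).1 (by push_cast; exact h t)

/-- For every `k ≥ 1` and every integer `t`, `6` divides `Q_{6k-1}(t)`, where
`Q_n = Polynomial.dickson 2 1 n` over `ℤ`. -/
theorem six_dvd_dickson_eval (k : ℕ) (hk : 1 ≤ k) (t : ℤ) :
    (6 : ℤ) ∣ (dickson 2 (1 : ℤ) (6 * k - 1)).eval t := by
  obtain ⟨j, rfl⟩ : ∃ j, k = j + 1 := ⟨k - 1, by omega⟩
  rw [show 6 * (j + 1) - 1 = (5 + 1) * j + 5 by omega]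
  refine Dvd.dvd.trans ?_ (eval_dvd (dickson_two_dvd_dickson_two 1 5 j))
  rw [dickson_two_one_five]
  simpa using (Int.six_dvd_mul_sq_sub_one t).mul_right (t ^ 2 - 3)
end

section
/- Let D ≥ 2 be an integer not divisible by 6 and let m ≥ 2 be a divisor of D. Then there exists a matrix A ∈ SL(2, ℤ/mℤ) such that A^D ≠ I and A^D ≠ −I. -/
/-!
If `D` is even then `3 ∤ D`, so `ω = !![0, 1; -1, -1]`, of order `3`, has `ω ^ D ∈ {ω, ω ^ 2}`;
if `D` is odd then `J = !![0, 1; -1, 0]` satisfies `J ^ 2 = -1`, so `J ^ D = ± J`.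
In every case the `(0, 1)` entry of the power is `±1`, nonzero over any nontrivial ring
(such as `ℤ/mℤ`, `m ≥ 2`), whereas `±1` has zero off-diagonal entries.
-/

open scoped MatrixGroups

namespace Matrix

theorem ne_one_and_ne_neg_one_of_apply_ne_zero {n R : Type*} [DecidableEq n] [Ring R]
    {B : Matrix n n R} {i j : n} (hij : i ≠ j) (h : B i j ≠ 0) : B ≠ 1 ∧ B ≠ -1 := by
  constructor <;> rintro rfl <;> simp [one_apply_ne hij] at h

namespace SpecialLinearGroup

variable (R : Type*) [CommRing R]

def thirdTurn : SL(2, R) := ⟨!![0, 1; -1, -1], by simp [det_fin_two_of]⟩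

def quarterTurn : SL(2, R) := ⟨!![0, 1; -1, 0], by simp [det_fin_two_of]⟩

variable {R}

theorem coe_thirdTurn_sq : ((thirdTurn R ^ 2 : SL(2, R)) : Matrix (Fin 2) (Fin 2) R) =
    !![-1, -1; 1, 0] := by
  rw [sq, coe_mul, thirdTurn, coe_mk, mul_fin_two]
  simp

theorem thirdTurn_pow_three : thirdTurn R ^ 3 = 1 := by
  ext i j
  rw [pow_succ, coe_mul, coe_thirdTurn_sq]
  fin_cases i <;> fin_cases j <;> simp [thirdTurn]

theorem coe_quarterTurn_sq : ((quarterTurn R ^ 2 : SL(2, R)) : Matrix (Fin 2) (Fin 2) R) = -1 := by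
  rw [sq, coe_mul, quarterTurn, coe_mk, mul_fin_two, one_fin_two]
  ext i j
  fin_cases i <;> fin_cases j <;> simp

theorem quarterTurn_pow_four : quarterTurn R ^ 4 = 1 := by
  ext : 1
  rw [show 4 = 2 * 2 from rfl, pow_mul, coe_pow, coe_quarterTurn_sq]
  simp

variable [Nontrivial R]

theorem coe_thirdTurn_pow_ne_one_and_ne_neg_one {n : ℕ} (hn : ¬ 3 ∣ n) :
    ((thirdTurn R ^ n : SL(2, R)) : Matrix (Fin 2) (Fin 2) R) ≠ 1 ∧
      ((thirdTurn R ^ n : SL(2, R)) : Matrix (Fin 2) (Fin 2) R) ≠ -1 := by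
  refine ne_one_and_ne_neg_one_of_apply_ne_zero (i := 0) (j := 1) (by decide) ?_
  rw [pow_eq_pow_mod n thirdTurn_pow_three]
  obtain h | h : n % 3 = 1 ∨ n % 3 = 2 := by omega
  · rw [h, pow_one]
    simp [thirdTurn]
  · rw [h, coe_thirdTurn_sq]
    simp

theorem coe_quarterTurn_pow_ne_one_and_ne_neg_one {n : ℕ} (hn : Odd n) :
    ((quarterTurn R ^ n : SL(2, R)) : Matrix (Fin 2) (Fin 2) R) ≠ 1 ∧
      ((quarterTurn R ^ n : SL(2, R)) : Matrix (Fin 2) (Fin 2) R) ≠ -1 := by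
  refine ne_one_and_ne_neg_one_of_apply_ne_zero (i := 0) (j := 1) (by decide) ?_
  rw [pow_eq_pow_mod n quarterTurn_pow_four]
  obtain h | h : n % 4 = 1 ∨ n % 4 = 3 := by
    obtain ⟨k, rfl⟩ := hn
    omega
  · rw [h, pow_one]
    simp [quarterTurn]
  · rw [h, pow_succ, coe_mul, coe_quarterTurn_sq]
    simp [quarterTurn]

end SpecialLinearGroup

end Matrix

open Matrix.SpecialLinearGroup in
theorem exists_sl2_power_not_central_general (D m : ℕ) (h6 : ¬ (6 ∣ D))
    (hm : 2 ≤ m) :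
    ∃ A : Matrix.SpecialLinearGroup (Fin 2) (ZMod m),
      ((A ^ D : Matrix.SpecialLinearGroup (Fin 2) (ZMod m)) : Matrix (Fin 2) (Fin 2) (ZMod m)) ≠ 1 ∧
      ((A ^ D : Matrix.SpecialLinearGroup (Fin 2) (ZMod m)) : Matrix (Fin 2) (Fin 2) (ZMod m)) ≠ -1 := by
  have : Fact (1 < m) := ⟨hm⟩
  by_cases h2 : 2 ∣ D
  · have h3 : ¬ 3 ∣ D := fun h3 => h6 (Nat.Coprime.mul_dvd_of_dvd_of_dvd (by decide) h2 h3)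
    exact ⟨thirdTurn _, coe_thirdTurn_pow_ne_one_and_ne_neg_one h3⟩
  · exact ⟨quarterTurn _, coe_quarterTurn_pow_ne_one_and_ne_neg_one (Nat.odd_iff.mpr (by omega))⟩

/-- If `D ≥ 2` is not divisible by `6` and `m ≥ 2` divides `D`, then there is a matrix
`A ∈ SL(2, ℤ/mℤ)` with `A^D ≠ 1` and `A^D ≠ -1`. -/
theorem exists_sl2_power_not_central (D m : ℕ) (hD : 2 ≤ D) (h6 : ¬ (6 ∣ D))
    (hm : 2 ≤ m) (hmD : m ∣ D) :
    ∃ A : Matrix.SpecialLinearGroup (Fin 2) (ZMod m),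
      ((A ^ D : Matrix.SpecialLinearGroup (Fin 2) (ZMod m)) : Matrix (Fin 2) (Fin 2) (ZMod m)) ≠ 1 ∧
      ((A ^ D : Matrix.SpecialLinearGroup (Fin 2) (ZMod m)) : Matrix (Fin 2) (Fin 2) (ZMod m)) ≠ -1 :=
  exists_sl2_power_not_central_general D m h6 hm
end

section
/- Let g ≥ 1, let D ≥ 2 be an integer not divisible by 6, and let J be a proper ideal of the ring ℤ/Dℤ. Then there exists a matrix C in the symplectic group Sp(2g, ℤ/Dℤ) such that the entrywise reduction of C^D modulo J (a 2g×2g matrix over the quotient ring (ℤ/Dℤ)/J) is neither the identity matrix nor minus the identity matrix. -/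
open Matrix

lemma aux_not_pm {D : ℕ} (J : Ideal (ZMod D)) (hJ : J ≠ ⊤) {g : ℕ} (i : Fin g)
    (P : Matrix (Fin g ⊕ Fin g) (Fin g ⊕ Fin g) (ZMod D))
    (h : P (Sum.inl i) (Sum.inr i) = 1 ∨ P (Sum.inl i) (Sum.inr i) = -1) :
    P.map (Ideal.Quotient.mk J) ≠ 1 ∧ P.map (Ideal.Quotient.mk J) ≠ -1 := by
  have h1 : (1 : ZMod D) ∉ J := (Ideal.ne_top_iff_one J).mp hJ
  have hz : Ideal.Quotient.mk J (P (Sum.inl i) (Sum.inr i)) ≠ 0 := by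
    intro hz
    rw [Ideal.Quotient.eq_zero_iff_mem] at hz
    rcases h with h | h
    · rw [h] at hz; exact h1 hz
    · rw [h] at hz; exact h1 (by simpa using J.neg_mem hz)
  constructor <;> intro he
  · have := congrFun (congrFun he (Sum.inl i)) (Sum.inr i)
    simp [Matrix.map_apply, Matrix.one_apply_ne (by simp : (Sum.inl i : Fin g ⊕ Fin g) ≠ Sum.inr i)] at this
    exact hz this
  · have := congrFun (congrFun he (Sum.inl i)) (Sum.inr i)
    simp [Matrix.map_apply, Matrix.one_apply_ne (by simp : (Sum.inl i : Fin g ⊕ Fin g) ≠ Sum.inr i)] at this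
    exact hz this

/-- Let `g ≥ 1`, let `D ≥ 2` be not divisible by `6` and let `J` be a proper ideal of
`ℤ/Dℤ`. Then there is a matrix `C` in the symplectic group `Sp(2g, ℤ/Dℤ)` such that the
entrywise reduction of `C^D` modulo `J` is neither the identity matrix nor its negative. -/
theorem exists_symplectic_power_not_central_mod (g D : ℕ) (hg : 1 ≤ g) (hD : 2 ≤ D)
    (h6 : ¬ (6 ∣ D)) (J : Ideal (ZMod D)) (hJ : J ≠ ⊤) :
    ∃ C ∈ Matrix.symplecticGroup (Fin g) (ZMod D),
      (C ^ D).map (Ideal.Quotient.mk J) ≠ 1 ∧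
      (C ^ D).map (Ideal.Quotient.mk J) ≠ -1 := by
  set i0 : Fin g := ⟨0, hg⟩
  by_cases h3 : 3 ∣ D
  · -- D odd, use the standard J matrix
    have hodd : ¬ 2 ∣ D := by omega
    set N : Matrix (Fin g ⊕ Fin g) (Fin g ⊕ Fin g) (ZMod D) := Matrix.J (Fin g) (ZMod D) with hN
    refine ⟨N, SymplecticGroup.J_mem _ _, ?_⟩
    have hsq : N * N = -1 := Matrix.J_squared (Fin g) (ZMod D)
    obtain ⟨k, hk⟩ : ∃ k, D = 2 * k + 1 := ⟨D / 2, by omega⟩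
    have hpow : N ^ D = (-1 : Matrix _ _ (ZMod D)) ^ k * N := by
      rw [congrArg (fun n => N ^ n) hk, pow_succ, pow_mul, sq, hsq]
    have hNe : N (Sum.inl i0) (Sum.inr i0) = -1 := by
      simp [hN, Matrix.J, Matrix.one_apply_eq]
    have hentry : (N ^ D) (Sum.inl i0) (Sum.inr i0) = 1 ∨
        (N ^ D) (Sum.inl i0) (Sum.inr i0) = -1 := by
      rcases Nat.even_or_odd k with hk2 | hk2
      · rw [hpow, hk2.neg_one_pow, one_mul, hNe]; exact Or.inr rfl
      · rw [hpow, hk2.neg_one_pow]; simp [hNe]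
    exact aux_not_pm J hJ i0 _ hentry
  · -- 3 ∤ D, use an order-6 matrix
    set M : Matrix (Fin g ⊕ Fin g) (Fin g ⊕ Fin g) (ZMod D) :=
      Matrix.fromBlocks 0 1 (-1) 1 with hM
    have hMsq : M * M = Matrix.fromBlocks (-1) 1 (-1) 0 := by
      rw [hM, Matrix.fromBlocks_multiply]
      congr 1 <;> simp
    have hM3 : M ^ 3 = -1 := by
      rw [pow_succ, sq, hMsq, hM, Matrix.fromBlocks_multiply]
      ext (i | i) (j | j) <;> simp [Matrix.one_apply]
    have hM6 : M ^ 6 = 1 := by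
      rw [show (6 : ℕ) = 3 * 2 from rfl, pow_mul, hM3]
      simp
    have hmem : M ∈ Matrix.symplecticGroup (Fin g) (ZMod D) := by
      rw [SymplecticGroup.mem_iff, Matrix.J, hM, Matrix.fromBlocks_multiply,
        Matrix.fromBlocks_transpose, Matrix.fromBlocks_multiply]
      congr 1 <;> simp
    have hpowD : M ^ D = M ^ (D % 6) := by
      rw [congrArg (fun n => M ^ n) (Nat.div_add_mod D 6).symm, pow_add, pow_mul, hM6,
        one_pow, one_mul]
    have hr0 : D % 6 ≠ 0 := fun h => h6 (Nat.dvd_of_mod_eq_zero h)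
    have hr3 : D % 6 ≠ 3 := by omega
    have hrlt : D % 6 < 6 := Nat.mod_lt _ (by norm_num)
    have hMentry : M (Sum.inl i0) (Sum.inr i0) = 1 := by
      simp [hM, Matrix.one_apply_eq]
    have hM2entry : (M * M) (Sum.inl i0) (Sum.inr i0) = 1 := by
      rw [hMsq]; simp [Matrix.one_apply_eq]
    have hentry : (M ^ D) (Sum.inl i0) (Sum.inr i0) = 1 ∨
        (M ^ D) (Sum.inl i0) (Sum.inr i0) = -1 := by
      rw [hpowD]
      interval_cases h : D % 6
      · exact absurd rfl hr0
      · rw [pow_one]; exact Or.inl hMentry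
      · rw [sq]; exact Or.inl hM2entry
      · exact absurd rfl hr3
      · have h4 : M ^ 4 = -M := by
          rw [show (4 : ℕ) = 3 + 1 from rfl, pow_add, hM3, pow_one]; simp
        rw [h4]; simp [hMentry]
      · have h5 : M ^ 5 = -(M * M) := by
          rw [show (5 : ℕ) = 3 + 2 from rfl, pow_add, hM3, sq]; simp
        rw [h5]; simp [hM2entry]
    exact ⟨M, hmem, aux_not_pm J hJ i0 _ hentry⟩
end

section
/- Let D be a positive integer divisible by 6. Then for every matrix A ∈ SL(2, ℤ/6ℤ), either A^D = I or A^D = −I (i.e. the D-th power of every element of SL(2, ℤ/6ℤ) is central). -/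
instance sl2_zmod6_deceq : DecidableEq (Matrix.SpecialLinearGroup (Fin 2) (ZMod 6)) :=
  fun A B => decidable_of_iff _ Subtype.ext_iff.symm

instance sl2_zmod6_fintype : Fintype (Matrix.SpecialLinearGroup (Fin 2) (ZMod 6)) :=
  Subtype.fintype _

set_option maxHeartbeats 16000000 in
set_option maxRecDepth 100000 in
lemma sl2_zmod6_pow_six :
    ∀ A : Matrix.SpecialLinearGroup (Fin 2) (ZMod 6), A ^ 6 = 1 ∨ A ^ 6 = -1 := by decide

/-- If `D > 0` is divisible by `6`, then the `D`-th power of every element of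
`SL(2, ℤ/6ℤ)` is `1` or `-1`, i.e. is central. -/
theorem sl2_zmod6_power_central (D : ℕ) (hD : 0 < D) (h6 : 6 ∣ D)
    (A : Matrix.SpecialLinearGroup (Fin 2) (ZMod 6)) :
    ((A ^ D : Matrix.SpecialLinearGroup (Fin 2) (ZMod 6)) : Matrix (Fin 2) (Fin 2) (ZMod 6)) = 1 ∨
    ((A ^ D : Matrix.SpecialLinearGroup (Fin 2) (ZMod 6)) : Matrix (Fin 2) (Fin 2) (ZMod 6)) = -1 := by
  obtain ⟨k, rfl⟩ := h6
  rw [pow_mul]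
  rcases sl2_zmod6_pow_six A with h | h <;> rw [h]
  · left; simp
  · rcases Nat.even_or_odd k with hk | hk
    · left
      push_cast
      rw [hk.neg_one_pow]; simp
    · right
      push_cast
      rw [hk.neg_one_pow]; simp
end

section
/- Let H be a group and G a subgroup of H of finite index n ≥ 1. Then for every element a ∈ H, the power a^(n!) belongs to G. -/
/-- If `G` is a subgroup of `H` of finite index `n ≥ 1`, then `a ^ n! ∈ G` for every
`a ∈ H`. -/
theorem pow_factorial_index_mem {H : Type*} [Group H] (G : Subgroup H) (n : ℕ)
    (hn : 1 ≤ n) (hidx : G.index = n) (a : H) :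
    a ^ n.factorial ∈ G := by
  have hfi : G.FiniteIndex := ⟨by omega⟩
  have hfin : Finite (H ⧸ G) := G.finite_quotient_of_finiteIndex
  have hcard : Nat.card (H ⧸ G) = n := hidx
  have hperm : Nat.card (Equiv.Perm (H ⧸ G)) = n.factorial := by
    haveI : Fintype (H ⧸ G) := Fintype.ofFinite _
    haveI : DecidableEq (H ⧸ G) := Classical.decEq _
    rw [Nat.card_eq_fintype_card, Fintype.card_perm]
    rw [Nat.card_eq_fintype_card] at hcard
    rw [hcard]
  have key : (MulAction.toPermHom H (H ⧸ G)) (a ^ n.factorial) = 1 := by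
    rw [map_pow, ← hperm, pow_card_eq_one']
  have : a ^ n.factorial ∈ (MulAction.toPermHom H (H ⧸ G)).ker := key
  rw [← Subgroup.normalCore_eq_ker] at this
  exact G.normalCore_le this
end

section
/- Let H be a group, G a subgroup of H of finite index n ≥ 1, and D ≥ 1 an integer. If the quotient Q(G)[D] = G/X(G)[D] is infinite, then the quotient Q(H)[n!·D] = H/X(H)[n!·D] is infinite. -/
/-- The `D`-th power subgroup `X(G)[D]`: the subgroup of `G` generated by all `D`-th
powers of elements of `G`. -/
def powerSubgroup (G : Type*) [Group G] (D : ℕ) : Subgroup G :=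
  Subgroup.closure {x : G | ∃ g : G, x = g ^ D}

/-- If `G` is a subgroup of `H` of finite index `n ≥ 1` and `Q(G)[D] = G/X(G)[D]` is
infinite, then `Q(H)[n!·D] = H/X(H)[n!·D]` is infinite. -/
theorem powerQuotient_infinite_of_subgroup {H : Type*} [Group H] (G : Subgroup H)
    (n D : ℕ) (hn : 1 ≤ n) (hD : 1 ≤ D) (hidx : G.index = n)
    (hinf : Infinite (G ⧸ powerSubgroup G D)) :
    Infinite (H ⧸ powerSubgroup H (n.factorial * D)) := by
  set K : Subgroup H := (powerSubgroup G D).map G.subtype with hK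
  have hidx0 : G.index ≠ 0 := by omega
  have hNK : powerSubgroup H (n.factorial * D) ≤ K := by
    rw [powerSubgroup]
    apply Subgroup.closure_le _ |>.2
    rintro x ⟨h, rfl⟩
    have hg : h ^ n.factorial ∈ G := by
      apply Subgroup.pow_mem_of_index_ne_zero_of_dvd hidx0
      intro m hm hle
      exact Nat.dvd_factorial hm (by omega)
    refine ⟨(⟨h ^ n.factorial, hg⟩ : G) ^ D, Subgroup.subset_closure ⟨_, rfl⟩, ?_⟩
    simp [pow_mul]
  have hcomap : K.subgroupOf G = powerSubgroup G D := by
    rw [hK, Subgroup.subgroupOf, Subgroup.comap_map_eq_self_of_injective G.subtype_injective]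
  have hrel : K.relIndex G = 0 := by
    rw [Subgroup.relIndex, hcomap, Subgroup.index_eq_zero_iff_infinite]
    exact hinf
  have hKG : K ≤ G := by
    rw [hK]; exact Subgroup.map_subtype_le _
  have hKidx : K.index = 0 := by
    have := Subgroup.relIndex_mul_index hKG
    rw [hrel, zero_mul] at this
    omega
  have : (powerSubgroup H (n.factorial * D)).index = 0 :=
    Nat.eq_zero_of_zero_dvd (hKidx ▸ Subgroup.index_dvd_of_le hNK)
  exact Subgroup.index_eq_zero_iff_infinite.mp this
end

section
/- Let H be a group, G a normal subgroup of H of finite index n ≥ 1, and D ≥ 1 an integer. If the quotient Q(G)[D] = G/X(G)[D] is infinite, then the quotient Q(H)[n·D] = H/X(H)[n·D] is infinite. -/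
lemma powerSubgroup_normal (G : Type*) [Group G] (D : ℕ) : (powerSubgroup G D).Normal := by
  constructor
  intro x hx g
  induction hx using Subgroup.closure_induction with
  | mem y hy =>
    obtain ⟨z, rfl⟩ := hy
    refine Subgroup.subset_closure ⟨g * z * g⁻¹, ?_⟩
    simp [conj_pow]
  | one => simpa using Subgroup.one_mem _
  | mul a b _ _ ha hb =>
    have := Subgroup.mul_mem _ ha hb
    simpa [mul_assoc] using this
  | inv a _ ha =>
    have := Subgroup.inv_mem _ ha
    simpa [mul_assoc] using this

/-- If `G` is a normal subgroup of `H` of finite index `n ≥ 1` and `Q(G)[D] = G/X(G)[D]`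
is infinite, then `Q(H)[n·D] = H/X(H)[n·D]` is infinite. -/
theorem powerQuotient_infinite_of_normal_subgroup {H : Type*} [Group H] (G : Subgroup H)
    (hG : G.Normal) (n D : ℕ) (hn : 1 ≤ n) (hD : 1 ≤ D) (hidx : G.index = n)
    (hinf : Infinite (G ⧸ powerSubgroup G D)) :
    Infinite (H ⧸ powerSubgroup H (n * D)) := by
  by_contra hfin
  rw [not_infinite_iff_finite] at hfin
  haveI := powerSubgroup_normal H (n * D)
  -- Every generator h^(n*D) lies in the image of powerSubgroup G D
  have hle : powerSubgroup H (n * D) ≤ (powerSubgroup G D).map G.subtype := by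
    rw [powerSubgroup, Subgroup.closure_le]
    rintro x ⟨h, rfl⟩
    have hmem : h ^ n ∈ G := by
      rw [← hidx]; exact G.pow_index_mem h
    refine ⟨⟨h ^ n, hmem⟩ ^ D, Subgroup.subset_closure ⟨⟨h ^ n, hmem⟩, rfl⟩, ?_⟩
    simp [pow_mul]
  have hleG : (powerSubgroup H (n * D)).comap G.subtype ≤ powerSubgroup G D := by
    refine le_trans (Subgroup.comap_mono hle) ?_
    rw [Subgroup.comap_map_eq_self_of_injective G.subtype_injective]
  -- index of powerSubgroup H (n*D) is finite (nonzero)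
  have hidx_ne : (powerSubgroup H (n * D)).index ≠ 0 := by
    have : Nat.card (H ⧸ powerSubgroup H (n * D)) ≠ 0 := Nat.card_ne_zero.mpr ⟨⟨1⟩, hfin⟩
    exact this
  have hrel : (powerSubgroup H (n * D)).relIndex G ≠ 0 := fun h =>
    hidx_ne (Nat.eq_zero_of_zero_dvd (h ▸ Subgroup.relIndex_dvd_index_of_normal _ _))
  have hPG : (powerSubgroup G D).index ≠ 0 := by
    intro h
    have hdvd := Subgroup.index_dvd_of_le hleG
    rw [h] at hdvd
    exact hrel (Nat.eq_zero_of_zero_dvd hdvd)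
  have : Finite (G ⧸ powerSubgroup G D) := Nat.finite_of_card_ne_zero hPG
  exact absurd this hinf.not_finite
end

section
/- Let p be a prime, m ≥ 1 an integer, D = p^m, and g ≥ 2, where additionally m ≥ 2 and g ≥ 3 in case p ∈ {2, 3}. Then the subgroup of the symplectic group Sp(2g, ℤ/Dℤ) generated by the set of D-th powers {A^D : A ∈ Sp(2g, ℤ/Dℤ)} is the whole group Sp(2g, ℤ/Dℤ). -/
/-!
Over a local ring `R`, `Sp(2n, R)` is generated by the symplectic transvections
`x ↦ x + c ω(v, x) v` with `v` unimodular: peeling off one hyperbolic pair at a time, a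
symplectic matrix fixing the pairs outside `Q` is a product of transvections along vectors
supported on `Q`.
The same transvections move any unimodular vector to any other, so all transvections with the same
parameter `c` are conjugate, and in an abelian quotient their image depends on `c` alone. If `2`
and `3` are units, replacing `v` by `2 v` multiplies `c` by `4`, so the image of `3 c` is trivial;
if `n ≥ 3`, a relation between products of transvections along three orthogonal basis vectors
kills the image as well. Hence `Sp(2g, ℤ/p^m)` is perfect, and so is its quotient by the subgroup
generated by `p^m`-th powers; that quotient is a finite `p`-group, hence nilpotent, hence trivial.
-/

lemma IsLocalRing.isUnit_add_of_not_isUnit {R : Type*} [CommRing R] [IsLocalRing R] {a b : R}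
    (ha : IsUnit a) (hb : ¬IsUnit b) : IsUnit (a + b) := by
  by_contra hab
  refine (IsLocalRing.isUnit_or_isUnit_of_isUnit_add (a := a + b) (b := -b) ?_).elim hab
    (hb ∘ (IsUnit.neg_iff b).1)
  rwa [add_neg_cancel_right]

theorem Subgroup.closure_pow_prime_pow_eq_top {G : Type*} [Group G] [Finite G]
    [Group.IsPerfect G] (p k : ℕ) [Fact p.Prime] :
    Subgroup.closure {x : G | ∃ A, x = A ^ p ^ k} = ⊤ := by
  set N := Subgroup.closure {x : G | ∃ A, x = A ^ p ^ k}
  have : N.Normal := Subgroup.normalizer_eq_top_iff.1 <| top_le_iff.1 <|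
    Subgroup.le_normalizer_closure_iff.2 fun g _ _ ⟨A, hA⟩ =>
      Subgroup.subset_closure ⟨g * A * g⁻¹, by rw [hA, conj_pow]⟩
  have hP : IsPGroup p (G ⧸ N) := fun q => QuotientGroup.induction_on q fun A =>
    ⟨k, by
      rw [← QuotientGroup.mk_pow, QuotientGroup.eq_one_iff]
      exact Subgroup.subset_closure ⟨A, rfl⟩⟩
  exact QuotientGroup.subgroup_eq_top_of_subsingleton N <| not_nontrivial_iff_subsingleton.1
    fun _ => Group.IsPerfect.not_isNilpotent (G ⧸ N) hP.isNilpotent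

lemma ZMod.isLocalRing_prime_pow {p m : ℕ} [Fact p.Prime] (hm : m ≠ 0) :
    IsLocalRing (ZMod (p ^ m)) :=
  have : Fact (1 < p ^ m) := ⟨Nat.one_lt_pow hm (Fact.out : p.Prime).one_lt⟩
  IsLocalRing.of_surjective' (PadicInt.toZModPow m) fun x => by
    obtain ⟨z, rfl⟩ := ZMod.intCast_surjective x
    exact ⟨z, map_intCast _ z⟩

lemma ZMod.isUnit_natCast_prime_pow {p m k : ℕ} (hp : p.Prime) (hk : ¬p ∣ k) :
    IsUnit (k : ZMod (p ^ m)) :=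
  (ZMod.isUnit_iff_coprime k (p ^ m)).2 (((Nat.Prime.coprime_iff_not_dvd hp).2 hk).symm.pow_right m)

open Matrix

namespace SymplecticGroup

variable {l R : Type*} [Fintype l] [DecidableEq l] [CommRing R]

variable (l R) in
def symplecticForm : (l ⊕ l → R) →ₗ[R] (l ⊕ l → R) →ₗ[R] R :=
  toLinearMap₂' R (J l R)

local notation "ω" => symplecticForm _ _

lemma symplecticForm_apply (x y : l ⊕ l → R) : ω x y = x ⬝ᵥ J l R *ᵥ y :=
  toLinearMap₂'_apply' _ _ _

lemma symplecticForm_eq_sum (x y : l ⊕ l → R) :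
    ω x y = ∑ i, (x (.inr i) * y (.inl i) - x (.inl i) * y (.inr i)) := by
  simp only [symplecticForm_apply, dotProduct, J, fromBlocks_mulVec, zero_mulVec, neg_mulVec,
    one_mulVec, zero_add, add_zero, Fintype.sum_sum_type, Sum.elim_inl, Sum.elim_inr, Pi.neg_apply,
    Function.comp_apply, mul_neg, Finset.sum_neg_distrib, mul_comm, Finset.sum_sub_distrib]
  ring

@[simp]
lemma symplecticForm_self (x : l ⊕ l → R) : ω x x = 0 := by
  simp [symplecticForm_eq_sum, mul_comm]

lemma symplecticForm_swap (x y : l ⊕ l → R) : ω y x = -ω x y := by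
  simp only [symplecticForm_eq_sum, ← Finset.sum_neg_distrib]
  exact Finset.sum_congr rfl fun _ _ => by ring

@[simp]
lemma symplecticForm_single_inl (x : l ⊕ l → R) (j : l) :
    ω x (Pi.single (.inl j) 1) = x (.inr j) := by
  simp [symplecticForm_eq_sum, Pi.single_apply]

@[simp]
lemma symplecticForm_single_inr (x : l ⊕ l → R) (j : l) :
    ω x (Pi.single (.inr j) 1) = -x (.inl j) := by
  simp [symplecticForm_eq_sum, Pi.single_apply]

@[simp]
lemma single_inl_symplecticForm (x : l ⊕ l → R) (j : l) :
    ω (Pi.single (.inl j) 1) x = -x (.inr j) := by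
  rw [symplecticForm_swap, symplecticForm_single_inl]

@[simp]
lemma single_inr_symplecticForm (x : l ⊕ l → R) (j : l) :
    ω (Pi.single (.inr j) 1) x = x (.inl j) := by
  rw [symplecticForm_swap, symplecticForm_single_inr, neg_neg]

lemma mem_iff_symplecticForm {A : Matrix (l ⊕ l) (l ⊕ l) R} :
    A ∈ symplecticGroup l R ↔ ∀ x y, ω (A *ᵥ x) (A *ᵥ y) = ω x y := by
  have key : ∀ x y, ω (A *ᵥ x) (A *ᵥ y) = x ⬝ᵥ (Aᵀ * J l R * A) *ᵥ y := fun x y => by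
    rw [symplecticForm_apply, ← vecMul_transpose, ← dotProduct_mulVec, mulVec_mulVec,
      mulVec_mulVec]
  simp only [mem_iff', key, symplecticForm_apply, ← toLinearMap₂'_apply' (T := R),
    ← LinearMap.ext_iff₂, (toLinearMap₂' R).injective.eq_iff]

@[simp]
lemma symplecticForm_smul_smul (A : symplecticGroup l R) (x y : l ⊕ l → R) :
    ω (A • x) (A • y) = ω x y :=
  mem_iff_symplecticForm.1 A.2 x y

lemma one_add_smul_vecMulVec_mulVec (v x : l ⊕ l → R) (c : R) :
    (1 + c • vecMulVec v (v ᵥ* J l R)) *ᵥ x = x + (c * ω v x) • v := by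
  rw [add_mulVec, one_mulVec, smul_mulVec, vecMulVec_mulVec, op_smul_eq_smul, smul_smul,
    ← dotProduct_mulVec, symplecticForm_apply]

def transvection (v : l ⊕ l → R) (c : R) : symplecticGroup l R :=
  ⟨1 + c • vecMulVec v (v ᵥ* J l R), mem_iff_symplecticForm.2 fun x y => by
    simp only [one_add_smul_vecMulVec_mulVec, map_add, map_smul, LinearMap.add_apply,
      LinearMap.smul_apply, symplecticForm_self, smul_eq_mul, symplecticForm_swap v x]
    ring⟩

lemma transvection_smul (v x : l ⊕ l → R) (c : R) :
    transvection v c • x = x + (c * ω v x) • v :=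
  one_add_smul_vecMulVec_mulVec v x c

lemma ext_smul {A B : symplecticGroup l R} (h : ∀ x : l ⊕ l → R, A • x = B • x) : A = B :=
  Subtype.ext (ext_iff_smul.2 h)

lemma transvection_mul_transvection (v : l ⊕ l → R) (a b : R) :
    transvection v a * transvection v b = transvection v (a + b) := ext_smul fun x => by
  simp only [mul_smul, transvection_smul, map_add, map_smul, symplecticForm_self, smul_eq_mul]
  module

lemma transvection_zero (v : l ⊕ l → R) : transvection v 0 = 1 := ext_smul fun x => by
  simp [transvection_smul]

lemma transvection_smul_left (a : R) (v : l ⊕ l → R) (c : R) :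
    transvection (a • v) c = transvection v (a * a * c) := ext_smul fun x => by
  simp only [transvection_smul, map_smul, LinearMap.smul_apply, smul_eq_mul, smul_smul]
  ring_nf

lemma mul_transvection_mul_inv (A : symplecticGroup l R) (v : l ⊕ l → R) (c : R) :
    A * transvection v c * A⁻¹ = transvection (A • v) c := ext_smul fun x => by
  have h : ω v (A⁻¹ • x) = ω (A • v) x := by
    rw [← symplecticForm_smul_smul A, smul_inv_smul]
  simp only [mul_smul, transvection_smul, smul_add, smul_inv_smul, smul_comm A (_ : R), h]

def doubleTransvection (u v : l ⊕ l → R) (c : R) : symplecticGroup l R :=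
  transvection u (-c) * transvection v (-c) * transvection (u + v) c

lemma doubleTransvection_smul {u v : l ⊕ l → R} (h : ω u v = 0) (c : R) (x : l ⊕ l → R) :
    doubleTransvection u v c • x = x + c • (ω v x • u + ω u x • v) := by
  have h' : ω v u = 0 := by rw [symplecticForm_swap, h, neg_zero]
  simp only [doubleTransvection, mul_smul, transvection_smul, map_add, map_smul,
    LinearMap.add_apply, symplecticForm_self, h, h', smul_eq_mul]
  module

lemma doubleTransvection_mul_doubleTransvection {u v w : l ⊕ l → R} (huv : ω u v = 0)
    (huw : ω u w = 0) (hvw : ω v w = 0) (c : R) :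
    doubleTransvection u v c * doubleTransvection u w c = doubleTransvection u (v + w) c :=
  ext_smul fun x => by
    have hvu : ω v u = 0 := by rw [symplecticForm_swap, huv, neg_zero]
    simp only [mul_smul, doubleTransvection_smul huv, doubleTransvection_smul huw,
      doubleTransvection_smul (show ω u (v + w) = 0 by rw [map_add, huv, huw, add_zero]),
      map_add, map_smul, LinearMap.add_apply, symplecticForm_self, huw, hvw, hvu,
      smul_eq_mul]
    module

/-- Over a local ring this is equivalent to the entries of `v` generating the unit ideal. -/
def IsUnimodular (v : l ⊕ l → R) : Prop := ∃ i, IsUnit (v i)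

variable (R) in
def pairSupported (Q : Finset l) : Submodule R (l ⊕ l → R) where
  carrier := {v | ∀ j ∉ Q, v (.inl j) = 0 ∧ v (.inr j) = 0}
  add_mem' hu hv j hj := by simp [hu j hj, hv j hj]
  zero_mem' j hj := by simp
  smul_mem' c v hv j hj := by simp [hv j hj]

omit [Fintype l] in
lemma single_inl_mem_pairSupported {Q : Finset l} {j : l} (hj : j ∈ Q) :
    Pi.single (.inl j) 1 ∈ pairSupported R Q := fun k hk => by
  simp [ne_of_mem_of_not_mem hj hk |>.symm]

omit [Fintype l] in
lemma single_inr_mem_pairSupported {Q : Finset l} {j : l} (hj : j ∈ Q) :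
    Pi.single (.inr j) 1 ∈ pairSupported R Q := fun k hk => by
  simp [ne_of_mem_of_not_mem hj hk |>.symm]

omit [DecidableEq l] in
lemma mem_pairSupported_univ (v : l ⊕ l → R) : v ∈ pairSupported R Finset.univ :=
  fun j hj => absurd (Finset.mem_univ j) hj

omit [Fintype l] [DecidableEq l] in
lemma pairSupported_mono {Q Q' : Finset l} (h : Q ⊆ Q') :
    pairSupported R Q ≤ pairSupported R Q' :=
  fun _ hv j hj => hv j fun hjQ => hj (h hjQ)

variable (R) in
def pairFixingSubgroup (Q : Finset l) : Subgroup (symplecticGroup l R) :=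
  fixingSubgroup _
    {x : l ⊕ l → R | ∃ j ∉ Q, x = Pi.single (.inl j) 1 ∨ x = Pi.single (.inr j) 1}

lemma mem_pairFixingSubgroup {Q : Finset l} {A : symplecticGroup l R} :
    A ∈ pairFixingSubgroup R Q ↔ ∀ j ∉ Q,
      A • (Pi.single (.inl j) 1 : l ⊕ l → R) = Pi.single (.inl j) 1 ∧
        A • (Pi.single (.inr j) 1 : l ⊕ l → R) = Pi.single (.inr j) 1 := by
  simp only [pairFixingSubgroup, mem_fixingSubgroup_iff, Set.mem_ofPred_eq]
  grind

lemma smul_mem_pairSupported {Q : Finset l} {A : symplecticGroup l R}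
    (hA : A ∈ pairFixingSubgroup R Q) {x : l ⊕ l → R} (hx : x ∈ pairSupported R Q) :
    A • x ∈ pairSupported R Q := fun j hj => by
  obtain ⟨hl, hr⟩ := mem_pairFixingSubgroup.1 hA j hj
  obtain ⟨hxl, hxr⟩ := hx j hj
  constructor
  · simpa [hr, hxl] using symplecticForm_smul_smul A (Pi.single (.inr j) 1) x
  · simpa [hl, hxr] using symplecticForm_smul_smul A (Pi.single (.inl j) 1) x

lemma pairFixingSubgroup_empty : pairFixingSubgroup R (∅ : Finset l) = ⊥ := by
  refine eq_bot_iff.2 fun A hA => Subtype.ext (Matrix.ext fun i j => ?_)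
  have hj : A • (Pi.single j 1 : l ⊕ l → R) = Pi.single j 1 := by
    cases j with
    | inl j => exact (mem_pairFixingSubgroup.1 hA j (Finset.notMem_empty j)).1
    | inr j => exact (mem_pairFixingSubgroup.1 hA j (Finset.notMem_empty j)).2
  have := congrFun hj i
  change ((A : Matrix (l ⊕ l) (l ⊕ l) R) *ᵥ Pi.single j 1) i = _ at this
  rw [mulVec_single_one] at this
  simpa [Matrix.one_apply, Pi.single_apply, eq_comm] using this

variable (R) in
def transvectionSubgroup (Q : Finset l) : Subgroup (symplecticGroup l R) :=
  Subgroup.closure {A | ∃ v ∈ pairSupported R Q, IsUnimodular v ∧ ∃ c, A = transvection v c}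

lemma transvection_mem_transvectionSubgroup {Q : Finset l} {v : l ⊕ l → R}
    (hv : v ∈ pairSupported R Q) (hu : IsUnimodular v) (c : R) :
    transvection v c ∈ transvectionSubgroup R Q :=
  Subgroup.subset_closure ⟨v, hv, hu, c, rfl⟩

lemma transvectionSubgroup_mono {Q Q' : Finset l} (h : Q ⊆ Q') :
    transvectionSubgroup R Q ≤ transvectionSubgroup R Q' :=
  Subgroup.closure_mono fun _ ⟨v, hv, hu, c, hA⟩ => ⟨v, pairSupported_mono h hv, hu, c, hA⟩

lemma transvectionSubgroup_le_pairFixingSubgroup (Q : Finset l) :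
    transvectionSubgroup R Q ≤ pairFixingSubgroup R Q := by
  refine Subgroup.closure_le _ |>.2 ?_
  rintro _ ⟨v, hv, -, c, rfl⟩
  refine mem_pairFixingSubgroup.2 fun j hj => ?_
  simp [transvection_smul, (hv j hj).1, (hv j hj).2]

section IsLocalRing

variable [IsLocalRing R]

lemma isUnimodular_of_isUnit_symplecticForm_right {x y : l ⊕ l → R} (h : IsUnit (ω x y)) :
    IsUnimodular y := by
  by_contra hy
  simp only [IsUnimodular, not_exists] at hy
  refine (IsLocalRing.mem_maximalIdeal _).1 ?_ h
  rw [symplecticForm_apply, dotProduct_mulVec]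
  exact Ideal.sum_mem _ fun i _ =>
    Ideal.mul_mem_left _ _ ((IsLocalRing.mem_maximalIdeal _).2 (hy i))

lemma isUnimodular_of_isUnit_symplecticForm_left {x y : l ⊕ l → R} (h : IsUnit (ω x y)) :
    IsUnimodular x :=
  isUnimodular_of_isUnit_symplecticForm_right (by rwa [symplecticForm_swap, IsUnit.neg_iff])

lemma exists_mem_pairSupported_isUnit_symplecticForm {Q : Finset l} {x : l ⊕ l → R}
    (hx : x ∈ pairSupported R Q) (hu : IsUnimodular x) :
    ∃ y ∈ pairSupported R Q, IsUnit (ω x y) := by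
  obtain ⟨i, hi⟩ := hu
  have mem_Q : ∀ j, x i = x (.inl j) ∨ x i = x (.inr j) → j ∈ Q := fun j hj => by
    by_contra hjQ
    rcases hj with hj | hj <;> simp [hj, (hx j hjQ).1, (hx j hjQ).2] at hi
  cases i with
  | inl j => exact ⟨_, single_inr_mem_pairSupported (mem_Q j (.inl rfl)), by simpa using hi⟩
  | inr j => exact ⟨_, single_inl_mem_pairSupported (mem_Q j (.inr rfl)), by simpa using hi⟩

lemma IsUnimodular.smul {x : l ⊕ l → R} (hx : IsUnimodular x) (A : symplecticGroup l R) :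
    IsUnimodular (A • x) := by
  obtain ⟨y, -, hy⟩ :=
    exists_mem_pairSupported_isUnit_symplecticForm (mem_pairSupported_univ x) hx
  exact isUnimodular_of_isUnit_symplecticForm_left (x := A • x) (y := A • y) (by simpa using hy)

lemma exists_mem_transvectionSubgroup_smul_eq_of_isUnit {Q : Finset l} {u v : l ⊕ l → R}
    (hu : u ∈ pairSupported R Q) (hv : v ∈ pairSupported R Q) (huv : IsUnit (ω u v)) :
    ∃ A ∈ transvectionSubgroup R Q, A • u = v := by
  have h : IsUnit (ω u (v - u)) := by simpa using huv
  obtain ⟨a, ha⟩ := huv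
  refine ⟨transvection (v - u) (-↑a⁻¹), transvection_mem_transvectionSubgroup
    (sub_mem hv hu) (isUnimodular_of_isUnit_symplecticForm_right h) _, ?_⟩
  have hc : -↑a⁻¹ * ω (v - u) u = 1 := by
    rw [symplecticForm_swap, neg_mul_neg, map_sub, symplecticForm_self, sub_zero, ← ha,
      Units.inv_mul]
  rw [transvection_smul, hc, one_smul, add_sub_cancel]

lemma exists_mem_transvectionSubgroup_smul_eq {Q : Finset l} {u v : l ⊕ l → R}
    (hu : u ∈ pairSupported R Q) (hv : v ∈ pairSupported R Q) (hu' : IsUnimodular u)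
    (hv' : IsUnimodular v) : ∃ A ∈ transvectionSubgroup R Q, A • u = v := by
  by_cases huv : IsUnit (ω u v)
  · exact exists_mem_transvectionSubgroup_smul_eq_of_isUnit hu hv huv
  -- Pass through a vector `w` pairing invertibly with both `u` and `v`.
  obtain ⟨w, hw, huw, hwv⟩ :
      ∃ w ∈ pairSupported R Q, IsUnit (ω u w) ∧ IsUnit (ω w v) := by
    obtain ⟨a, ha, hua⟩ := exists_mem_pairSupported_isUnit_symplecticForm hu hu'
    obtain ⟨b, hb, hvb⟩ := exists_mem_pairSupported_isUnit_symplecticForm hv hv'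
    rw [← IsUnit.neg_iff, ← symplecticForm_swap] at hvb
    by_cases hav : IsUnit (ω a v)
    · exact ⟨a, ha, hua, hav⟩
    by_cases hub : IsUnit (ω u b)
    · exact ⟨b, hb, hub, hvb⟩
    refine ⟨a + b, add_mem ha hb, ?_, ?_⟩
    · rw [map_add]
      exact IsLocalRing.isUnit_add_of_not_isUnit hua hub
    · rw [map_add, LinearMap.add_apply, add_comm]
      exact IsLocalRing.isUnit_add_of_not_isUnit hvb hav
  obtain ⟨A, hA, rfl⟩ := exists_mem_transvectionSubgroup_smul_eq_of_isUnit hu hw huw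
  obtain ⟨B, hB, rfl⟩ := exists_mem_transvectionSubgroup_smul_eq_of_isUnit hw hv hwv
  exact ⟨B * A, mul_mem hB hA, mul_smul B A u⟩

lemma exists_mem_transvectionSubgroup_fix_single_inl_smul_eq_single_inr {Q : Finset l} {j : l}
    (hj : j ∈ Q) {v : l ⊕ l → R} (hv : v ∈ pairSupported R Q) (hvj : v (.inr j) = 1) :
    ∃ A ∈ transvectionSubgroup R Q,
      A • (Pi.single (.inl j) 1 : l ⊕ l → R) = Pi.single (.inl j) 1 ∧
        A • v = Pi.single (.inr j) 1 := by
  -- The transvection along `e` makes the `inl j` coordinate `1`, then the one along `f - v'`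
  -- carries `v'` to `f`; the latter fixes `e` since `v' (inr j) = 1`.
  set e : l ⊕ l → R := Pi.single (.inl j) 1 with he
  set f : l ⊕ l → R := Pi.single (.inr j) 1 with hf
  set c := v (.inl j) - 1 with hc
  set v' := v - c • e with hv'
  have he_mem : e ∈ pairSupported R Q := single_inl_mem_pairSupported hj
  have hv'_mem : v' ∈ pairSupported R Q := sub_mem hv (Submodule.smul_mem _ c he_mem)
  have hv'l : v' (.inl j) = 1 := by simp [hv', he, hc]
  have hv'r : v' (.inr j) = 1 := by simp [hv', he, hvj]
  have hw : ω (f - v') v' = 1 := by simp [hf, hv'l]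
  have hwe : ω (f - v') e = 0 := by simp [hf, he, hv'r]
  refine ⟨transvection (f - v') 1 * transvection e c, mul_mem ?_ ?_, ?_, ?_⟩
  · exact transvection_mem_transvectionSubgroup
      (sub_mem (single_inr_mem_pairSupported hj) hv'_mem)
      (isUnimodular_of_isUnit_symplecticForm_left (hw ▸ isUnit_one)) 1
  · exact transvection_mem_transvectionSubgroup he_mem ⟨.inl j, by simp [he]⟩ c
  · rw [mul_smul, transvection_smul e, symplecticForm_self, mul_zero, zero_smul, add_zero,
      transvection_smul, hwe, mul_zero, zero_smul, add_zero]
  · have : transvection e c • v = v' := by simp [transvection_smul, he, hvj, hv', sub_eq_add_neg]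
    rw [mul_smul, this, transvection_smul, hw, one_mul, one_smul, add_sub_cancel]

lemma exists_mem_transvectionSubgroup_mul_mem_pairFixingSubgroup {Q : Finset l} {j : l}
    {A : symplecticGroup l R} (hA : A ∈ pairFixingSubgroup R (insert j Q)) :
    ∃ B ∈ transvectionSubgroup R (insert j Q), B * A ∈ pairFixingSubgroup R Q := by
  set e : l ⊕ l → R := Pi.single (.inl j) 1 with he
  set f : l ⊕ l → R := Pi.single (.inr j) 1 with hf
  have hj : j ∈ insert j Q := Finset.mem_insert_self j Q
  have he_mem : e ∈ pairSupported R (insert j Q) := single_inl_mem_pairSupported hj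
  have he_uni : IsUnimodular e := ⟨.inl j, by simp [he]⟩
  obtain ⟨B₁, hB₁, hB₁A⟩ := exists_mem_transvectionSubgroup_smul_eq
    (smul_mem_pairSupported hA he_mem) he_mem (he_uni.smul A) he_uni
  have hA₁ : B₁ * A ∈ pairFixingSubgroup R (insert j Q) :=
    mul_mem (transvectionSubgroup_le_pairFixingSubgroup _ hB₁) hA
  have hA₁e : (B₁ * A) • e = e := by rw [mul_smul, hB₁A]
  have hA₁f : ((B₁ * A) • f) (.inr j) = 1 := by
    have h := symplecticForm_smul_smul (B₁ * A) e f
    rwa [hA₁e, he, single_inl_symplecticForm, single_inl_symplecticForm, neg_inj, hf,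
      Pi.single_eq_same] at h
  obtain ⟨B₂, hB₂, hB₂e, hB₂f⟩ :=
    exists_mem_transvectionSubgroup_fix_single_inl_smul_eq_single_inr hj
      (smul_mem_pairSupported hA₁ (single_inr_mem_pairSupported hj)) hA₁f
  have hA₂ : B₂ * (B₁ * A) ∈ pairFixingSubgroup R (insert j Q) :=
    mul_mem (transvectionSubgroup_le_pairFixingSubgroup _ hB₂) hA₁
  refine ⟨B₂ * B₁, mul_mem hB₂ hB₁, mem_pairFixingSubgroup.2 fun k hk => ?_⟩
  rw [mul_assoc]
  by_cases hkj : k = j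
  · subst hkj
    exact ⟨by rw [mul_smul, hA₁e, hB₂e], by rw [mul_smul, hB₂f]⟩
  · exact mem_pairFixingSubgroup.1 hA₂ k (by simp [hkj, hk])

lemma pairFixingSubgroup_le_transvectionSubgroup (Q : Finset l) :
    pairFixingSubgroup R Q ≤ transvectionSubgroup R Q := by
  induction Q using Finset.induction_on with
  | empty => rw [pairFixingSubgroup_empty]; exact bot_le
  | insert j Q _ ih =>
    intro A hA
    obtain ⟨B, hB, hBA⟩ := exists_mem_transvectionSubgroup_mul_mem_pairFixingSubgroup hA
    simpa using mul_mem (inv_mem hB) (transvectionSubgroup_mono (Finset.subset_insert j Q) (ih hBA))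

variable (l R) in
theorem closure_transvection_eq_top :
    Subgroup.closure
      {A : symplecticGroup l R | ∃ v, IsUnimodular v ∧ ∃ c, A = transvection v c} = ⊤ := by
  refine eq_top_iff.2 fun A _ => ?_
  have hA : A ∈ transvectionSubgroup R Finset.univ :=
    pairFixingSubgroup_le_transvectionSubgroup _ (mem_pairFixingSubgroup.2 (by simp))
  refine Subgroup.closure_mono ?_ hA
  rintro _ ⟨v, -, hv, c, rfl⟩
  exact ⟨v, hv, c, rfl⟩

end IsLocalRing

section Abelianization

variable [IsLocalRing R] {G : Type*} [CommGroup G] (φ : symplecticGroup l R →* G)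

lemma map_transvection_eq_of_isUnimodular {u v : l ⊕ l → R} (hu : IsUnimodular u)
    (hv : IsUnimodular v) (c : R) : φ (transvection u c) = φ (transvection v c) := by
  obtain ⟨A, -, rfl⟩ := exists_mem_transvectionSubgroup_smul_eq (mem_pairSupported_univ u)
    (mem_pairSupported_univ v) hu hv
  rw [← mul_transvection_mul_inv, map_mul, map_mul, map_inv, mul_inv_cancel_comm]

lemma map_doubleTransvection_eq {v x y : l ⊕ l → R} (hv : IsUnimodular v) (hx : IsUnimodular x)
    (hy : IsUnimodular y) (hxy : IsUnimodular (x + y)) (c : R) :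
    φ (doubleTransvection x y c) = φ (transvection v (-c)) := by
  rw [doubleTransvection, map_mul, map_mul, map_transvection_eq_of_isUnimodular φ hx hv,
    map_transvection_eq_of_isUnimodular φ hy hv, map_transvection_eq_of_isUnimodular φ hxy hv,
    mul_assoc, ← map_mul, transvection_mul_transvection, neg_add_cancel, transvection_zero,
    map_one, mul_one]

lemma map_transvection_eq_one_of_two_lt_card (hl : 2 < Fintype.card l) {v : l ⊕ l → R}
    (hv : IsUnimodular v) (c : R) : φ (transvection v c) = 1 := by
  obtain ⟨a, b, d, hab, had, hbd⟩ := Fintype.two_lt_card_iff.1 hl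
  let e (k : l) : l ⊕ l → R := Pi.single (.inl k) 1
  have he (k : l) : IsUnimodular (e k) := ⟨.inl k, by simp [e]⟩
  have he_add {k : l} (w : l ⊕ l → R) (hw : w (.inl k) = 0) :
      IsUnimodular (e k + w) := ⟨.inl k, by simp [e, hw]⟩
  have horth (k k' : l) : ω (e k) (e k') = 0 := by simp [e]
  -- All three double transvections map to `φ (transvection v c)`: the relation reads `x * x = x`.
  have h := congrArg φ
    (doubleTransvection_mul_doubleTransvection (horth a b) (horth a d) (horth b d) (-c))
  rw [map_mul, map_doubleTransvection_eq φ hv (he a) (he b) (he_add _ (by simp [e, hab])),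
    map_doubleTransvection_eq φ hv (he a) (he d) (he_add _ (by simp [e, had])),
    map_doubleTransvection_eq φ hv (he a) (he_add _ (by simp [e, hbd]))
      (he_add _ (by simp [e, hab, had])), neg_neg] at h
  exact mul_eq_left.1 h

lemma map_transvection_eq_one_of_isUnit (h2 : IsUnit (2 : R)) (h3 : IsUnit (3 : R))
    {v : l ⊕ l → R} (hv : IsUnimodular v) (c : R) : φ (transvection v c) = 1 := by
  have h2v : IsUnimodular ((2 : R) • v) := by
    obtain ⟨i, hi⟩ := hv
    exact ⟨i, by simpa using h2.mul hi⟩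
  have h3c (c : R) : φ (transvection v (3 * c)) = 1 := by
    have h := map_transvection_eq_of_isUnimodular φ h2v hv c
    rw [transvection_smul_left, show 2 * 2 * c = 3 * c + c by ring,
      ← transvection_mul_transvection, map_mul] at h
    exact mul_eq_right.1 h
  obtain ⟨u, hu⟩ := h3
  simpa [← hu, ← mul_assoc] using h3c (↑u⁻¹ * c)

theorem isPerfect (h : 2 < Fintype.card l ∨ IsUnit (2 : R) ∧ IsUnit (3 : R)) :
    Group.IsPerfect (symplecticGroup l R) := by
  rw [Group.isPerfect_def, ← Abelianization.ker_of, eq_top_iff, ← closure_transvection_eq_top,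
    Subgroup.closure_le]
  rintro _ ⟨v, hv, c, rfl⟩
  rcases h with hl | ⟨h2, h3⟩
  · exact map_transvection_eq_one_of_two_lt_card _ hl hv c
  · exact map_transvection_eq_one_of_isUnit _ h2 h3 hv c

end Abelianization

end SymplecticGroup

theorem symplectic_power_subgroup_eq_top_general (p m g : ℕ) (hp : p.Prime) (hm : 1 ≤ m)
    (h23 : p = 2 ∨ p = 3 → 2 ≤ m ∧ 3 ≤ g) :
    Subgroup.closure
        {x : Matrix.symplecticGroup (Fin g) (ZMod (p ^ m)) |
          ∃ A : Matrix.symplecticGroup (Fin g) (ZMod (p ^ m)), x = A ^ (p ^ m)} = ⊤ := by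
  have : Fact p.Prime := ⟨hp⟩
  have : IsLocalRing (ZMod (p ^ m)) := ZMod.isLocalRing_prime_pow (by omega)
  have : Group.IsPerfect (symplecticGroup (Fin g) (ZMod (p ^ m))) := by
    refine SymplecticGroup.isPerfect ?_
    by_cases hp23 : p = 2 ∨ p = 3
    · exact .inl (by rw [Fintype.card_fin]; exact (h23 hp23).2)
    · obtain ⟨hp2, hp3⟩ := not_or.1 hp23
      have h2 := ZMod.isUnit_natCast_prime_pow (m := m) hp
        (mt (Nat.prime_dvd_prime_iff_eq hp Nat.prime_two).1 hp2)
      have h3 := ZMod.isUnit_natCast_prime_pow (m := m) hp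
        (mt (Nat.prime_dvd_prime_iff_eq hp Nat.prime_three).1 hp3)
      exact .inr ⟨by simpa using h2, by simpa using h3⟩
  exact Subgroup.closure_pow_prime_pow_eq_top p m

/-- Let `p` be a prime, `m ≥ 1`, `D = p^m` and `g ≥ 2`, with moreover `m ≥ 2` and `g ≥ 3`
when `p ∈ {2, 3}`. Then the subgroup of `Sp(2g, ℤ/Dℤ)` generated by all `D`-th powers is
the whole group. -/
theorem symplectic_power_subgroup_eq_top (p m g : ℕ) (hp : p.Prime) (hm : 1 ≤ m)
    (hg : 2 ≤ g) (h23 : p = 2 ∨ p = 3 → 2 ≤ m ∧ 3 ≤ g) :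
    Subgroup.closure
        {x : Matrix.symplecticGroup (Fin g) (ZMod (p ^ m)) |
          ∃ A : Matrix.symplecticGroup (Fin g) (ZMod (p ^ m)), x = A ^ (p ^ m)} = ⊤ :=
  symplectic_power_subgroup_eq_top_general p m g hp hm h23
end
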